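/- arXiv:2205.15776 — 3 statements merged into one kernel-verified Lean document; each statement's English description precedes it below -/
import Mathlib

section
/- For any finite family N of dyadic cubes of the same side length 2^{-n} in R^d, there exists a subset E ⊆ N of cardinality at least ⌊card(N)/5^d⌋ such that for any two distinct cubes Q, Q' ∈ E, the open cubes obtained by scaling Q and Q' about their centers by the factor 3 are disjoint. -/
/-- The open cube obtained by scaling the dyadic cube of generation `n` indexed by
`k ∈ ℤ^d` (namely `∏ᵢ (kᵢ 2^{-n}, (kᵢ+1) 2^{-n}]`) about its center by the factor `3`. -/
def enlargedOpenCube (d n : ℕ) (k : Fin d → ℤ) : Set (EuclideanSpace ℝ (Fin d)) :=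
  {x | ∀ i, |x i - ((k i : ℝ) + 1 / 2) * 2 ^ (-(n : ℤ))| < (3 / 2) * 2 ^ (-(n : ℤ))}

/-- From any finite family `N` of dyadic cubes of generation `n` (encoded by their
indices `k ∈ ℤ^d`) one can extract a subfamily `E` of cardinality at least
`⌊card N / 5^d⌋` such that the 3-fold concentric open enlargements of distinct cubes
of `E` are pairwise disjoint. -/
theorem exists_separated_subfamily (d n : ℕ) (N : Finset (Fin d → ℤ)) :
    ∃ E ⊆ N, N.card / 5 ^ d ≤ E.card ∧
      ∀ k ∈ E, ∀ k' ∈ E, k ≠ k' →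
        Disjoint (enlargedOpenCube d n k) (enlargedOpenCube d n k') := by
  classical
  have hcard : (Finset.univ : Finset (Fin d → ZMod 5)).card * (N.card / 5 ^ d) ≤ N.card := by
    have h : (Finset.univ : Finset (Fin d → ZMod 5)).card = 5 ^ d := by
      simp [Finset.card_univ]
    rw [h, mul_comm]
    exact Nat.div_mul_le_self _ _
  obtain ⟨b, -, hb⟩ := Finset.exists_le_card_fiber_of_mul_le_card_of_maps_to
    (f := fun k : Fin d → ℤ => fun i => ((k i : ZMod 5)))
    (fun a _ => Finset.mem_univ _) Finset.univ_nonempty hcard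
  refine ⟨N.filter (fun k => (fun i => ((k i : ZMod 5))) = b),
    Finset.filter_subset _ _, hb, ?_⟩
  intro k hk k' hk' hne
  simp only [Finset.mem_filter] at hk hk'
  obtain ⟨i, hi⟩ := Function.ne_iff.mp hne
  have hmod : ((k i : ZMod 5)) = ((k' i : ZMod 5)) :=
    congrFun (hk.2.trans hk'.2.symm) i
  have hdvd : (5 : ℤ) ∣ (k' i - k i) :=
    ((ZMod.intCast_eq_intCast_iff _ _ _).mp hmod).dvd
  have h5 : (5 : ℤ) ≤ |k' i - k i| :=
    Int.le_of_dvd (abs_pos.mpr (sub_ne_zero.mpr (fun h => hi h.symm)))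
      ((dvd_abs _ _).mpr hdvd)
  rw [Set.disjoint_left]
  intro x hx hx'
  have h1 := hx i
  have h2 := hx' i
  set w : ℝ := 2 ^ (-(n : ℤ)) with hwdef
  have hw : 0 < w := by positivity
  have h5R : (5 : ℝ) ≤ |((k' i : ℝ) - k i)| := by
    have := h5
    calc (5 : ℝ) ≤ ((|k' i - k i| : ℤ) : ℝ) := by exact_mod_cast this
      _ = |((k' i : ℝ) - k i)| := by push_cast; ring_nf
  have key : |((k' i : ℝ) - k i)| * w < 3 * w := by
    calc |((k' i : ℝ) - k i)| * w
        = |(((k' i : ℝ) + 1 / 2) * w - ((k i : ℝ) + 1 / 2) * w)| := by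
          rw [show ((k' i : ℝ) + 1 / 2) * w - ((k i : ℝ) + 1 / 2) * w
            = ((k' i : ℝ) - k i) * w by ring, abs_mul, abs_of_pos hw]
      _ ≤ |(((k' i : ℝ) + 1 / 2) * w - x i)| + |(x i - ((k i : ℝ) + 1 / 2) * w)| :=
          abs_sub_le _ _ _
      _ < (3 / 2) * w + (3 / 2) * w := by
          rw [abs_sub_comm]
          exact add_lt_add h2 h1
      _ = 3 * w := by ring
  nlinarith [mul_le_mul_of_nonneg_right h5R hw.le]
end

section
/- Let β : [0,1] → R be a convex function with β(1) = 0 such that q ↦ β(q) is nonnegative on [0,1]. Define q_r := inf{q > 0 : β(q) < rq} for r > 0. Then the map r ↦ q_r is continuous on (0,∞), and consequently r ↦ r q_r/(1 − q_r) is continuous on (0,∞) (interpreting the value as 0 when q_r = 0). -/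
/-- Let `β : [0,1] → ℝ` be convex, nonnegative, with `β(1) = 0` (an abstract
`L^q`-spectrum). With `q_r := inf {q ∈ (0,1] : β(q) < r q}`, the map `r ↦ q_r`
is continuous on `(0,∞)`, and consequently `r ↦ r q_r / (1 - q_r)` is continuous
on `(0,∞)`. -/
theorem qr_continuous (β : ℝ → ℝ) (hconv : ConvexOn ℝ (Set.Icc 0 1) β)
    (hβ1 : β 1 = 0) (hnonneg : ∀ q ∈ Set.Icc (0 : ℝ) 1, 0 ≤ β q) :
    ContinuousOn (fun r : ℝ =>
        sInf {q : ℝ | 0 < q ∧ q ≤ 1 ∧ β q < r * q}) (Set.Ioi 0) ∧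
    ContinuousOn (fun r : ℝ =>
        r * sInf {q : ℝ | 0 < q ∧ q ≤ 1 ∧ β q < r * q} /
          (1 - sInf {q : ℝ | 0 < q ∧ q ≤ 1 ∧ β q < r * q})) (Set.Ioi 0) := by
  set f : ℝ → ℝ := fun r => sInf {q : ℝ | 0 < q ∧ q ≤ 1 ∧ β q < r * q} with hfdef
  -- basic facts about the sets
  have hmem1 : ∀ r : ℝ, 0 < r → (1:ℝ) ∈ {q : ℝ | 0 < q ∧ q ≤ 1 ∧ β q < r * q} := by
    intro r hr
    refine ⟨one_pos, le_refl 1, ?_⟩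
    rw [hβ1, mul_one]; exact hr
  have hbdd : ∀ r : ℝ, BddBelow {q : ℝ | 0 < q ∧ q ≤ 1 ∧ β q < r * q} :=
    fun r => ⟨0, fun q hq => hq.1.le⟩
  have hf0 : ∀ r : ℝ, 0 ≤ f r := by
    intro r
    exact Real.sInf_nonneg (fun q hq => hq.1.le)
  -- upward closedness
  have hup : ∀ r : ℝ, 0 < r → ∀ a b : ℝ, a ∈ {q : ℝ | 0 < q ∧ q ≤ 1 ∧ β q < r * q} →
      a ≤ b → b ≤ 1 → b ∈ {q : ℝ | 0 < q ∧ q ≤ 1 ∧ β q < r * q} := by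
    intro r hr a b ha hab hb1
    obtain ⟨ha0, ha1, haβ⟩ := ha
    rcases eq_or_lt_of_le hb1 with hb1' | hb1'
    · rw [hb1']; exact hmem1 r hr
    have ha1' : a < 1 := lt_of_le_of_lt hab hb1'
    have h1a : (0:ℝ) < 1 - a := by linarith
    obtain ⟨t, htdef⟩ : ∃ t : ℝ, t = (b - a) / (1 - a) := ⟨_, rfl⟩
    have ht0 : 0 ≤ t := htdef ▸ div_nonneg (by linarith) h1a.le
    have ht1 : t < 1 := by
      rw [htdef, div_lt_one h1a]; linarith
    have hcomb : (1 - t) * a + t * 1 = b := by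
      rw [htdef]; field_simp; ring
    have hcx := hconv.2 (x := a) (y := 1) ⟨ha0.le, ha1⟩ ⟨zero_le_one, le_refl 1⟩
      (by linarith : (0:ℝ) ≤ 1 - t) ht0 (by ring)
    rw [smul_eq_mul, smul_eq_mul, smul_eq_mul, smul_eq_mul, hcomb, hβ1] at hcx
    refine ⟨lt_of_lt_of_le ha0 hab, hb1, ?_⟩
    have h1 : (1 - t) * β a < (1 - t) * (r * a) := by
      apply mul_lt_mul_of_pos_left haβ; linarith
    have h2 : (1 - t) * a ≤ b := by nlinarith
    nlinarith
  -- points of S_r arbitrarily close to 1 : f r < 1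
  have hlt1 : ∀ r : ℝ, 0 < r → f r < 1 := by
    intro r hr
    have hβhalf : 0 ≤ β (1/2) := hnonneg _ ⟨by norm_num, by norm_num⟩
    obtain ⟨B, hBdef⟩ : ∃ B : ℝ, B = β (1/2) + 1 := ⟨_, rfl⟩
    have hB : 0 < B := by rw [hBdef]; linarith
    obtain ⟨q, hqdef⟩ : ∃ q : ℝ, q = 1 - min (1/2) (r / (4 * B)) := ⟨_, rfl⟩
    have hmin0 : 0 < min (1/2) (r / (4 * B)) :=
      lt_min (by norm_num) (div_pos hr (by linarith))
    have hminh : min (1/2) (r / (4 * B)) ≤ 1/2 := min_le_left _ _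
    have hminr : min (1/2) (r / (4 * B)) ≤ r / (4 * B) := min_le_right _ _
    have hq12 : (1:ℝ)/2 ≤ q := by rw [hqdef]; linarith
    have hq1 : q < 1 := by rw [hqdef]; linarith
    have hq0 : 0 < q := by linarith
    -- convexity: β q ≤ 2(1-q) β(1/2)
    have hcomb : (2 * (1 - q)) * (1/2 : ℝ) + (2 * q - 1) * 1 = q := by ring
    have hcx := hconv.2 (x := (1/2 : ℝ)) (y := 1) ⟨by norm_num, by norm_num⟩
      ⟨zero_le_one, le_refl 1⟩ (by linarith : (0:ℝ) ≤ 2 * (1 - q))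
      (by linarith : (0:ℝ) ≤ 2 * q - 1) (by ring)
    rw [smul_eq_mul, smul_eq_mul, smul_eq_mul, smul_eq_mul, hcomb, hβ1] at hcx
    have hq_small : 1 - q ≤ r / (4 * B) := by rw [hqdef]; linarith
    have hrq : β q < r * q := by
      have h4B : (0:ℝ) < 4 * B := by linarith
      have h5 : (1 - q) * (4 * B) ≤ r := (le_div_iff₀ h4B).1 hq_small
      nlinarith [hβhalf, hBdef]
    calc f r ≤ q := csInf_le (hbdd r) ⟨hq0, hq1.le, hrq⟩
      _ < 1 := hq1
  -- characterization: anything strictly above f r (and ≤ 1) is in S_r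
  have hchar : ∀ r : ℝ, 0 < r → ∀ q : ℝ, f r < q → q ≤ 1 →
      q ∈ {q : ℝ | 0 < q ∧ q ≤ 1 ∧ β q < r * q} := by
    intro r hr q hq hq1
    obtain ⟨a, ha, haq⟩ := (csInf_lt_iff (hbdd r) ⟨1, hmem1 r hr⟩).1 hq
    exact hup r hr a q ha haq.le hq1
  -- antitonicity
  have hanti : ∀ r r' : ℝ, 0 < r → r ≤ r' → f r' ≤ f r := by
    intro r r' hr hrr
    apply csInf_le_csInf (hbdd r') ⟨1, hmem1 r hr⟩
    intro q hq
    exact ⟨hq.1, hq.2.1, lt_of_lt_of_le hq.2.2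
      (mul_le_mul_of_nonneg_right hrr hq.1.le)⟩
  -- main continuity
  have hcont : ∀ r₀ : ℝ, r₀ ∈ Set.Ioi (0:ℝ) → ContinuousAt f r₀ := by
    intro r₀ hr₀
    rw [Set.mem_Ioi] at hr₀
    rw [Metric.continuousAt_iff]
    intro ε hε
    obtain ⟨a, hadef⟩ : ∃ a : ℝ, a = f r₀ := ⟨_, rfl⟩
    have ha1 : a < 1 := hadef ▸ hlt1 r₀ hr₀
    have ha0 : 0 ≤ a := hadef ▸ hf0 r₀
    -- left approach: find r₁ < r₀ with f r₁ < a + ε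
    obtain ⟨r₁, hr₁0, hr₁lt, hfr₁⟩ : ∃ r₁ : ℝ, 0 < r₁ ∧ r₁ < r₀ ∧ f r₁ < a + ε := by
      obtain ⟨q, hqdef⟩ : ∃ q : ℝ, q = min (a + ε/2) ((1 + a)/2) := ⟨_, rfl⟩
      have hqgt : a < q := hqdef ▸ lt_min (by linarith) (by linarith)
      have hq1 : q ≤ 1 := hqdef ▸ le_trans (min_le_right _ _) (by linarith)
      have hq0 : 0 < q := lt_of_le_of_lt ha0 hqgt
      have hqa : q ≤ a + ε/2 := hqdef ▸ min_le_left _ _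
      have hqS := hchar r₀ hr₀ q (hadef ▸ hqgt) hq1
      have hβq : β q < r₀ * q := hqS.2.2
      obtain ⟨r₁, hr₁def⟩ : ∃ r₁ : ℝ, r₁ = max (r₀/2) ((β q / q + r₀)/2) := ⟨_, rfl⟩
      have hdiv : β q / q < r₀ := (div_lt_iff₀ hq0).2 (by linarith [hβq])
      have hr₁ge : (β q / q + r₀)/2 ≤ r₁ := hr₁def ▸ le_max_right _ _
      have hr₁ge2 : r₀/2 ≤ r₁ := hr₁def ▸ le_max_left _ _
      refine ⟨r₁, by linarith, ?_, ?_⟩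
      · rw [hr₁def]; apply max_lt (by linarith) (by linarith)
      · have hmid : β q < ((β q / q + r₀)/2) * q := by
          have h1 : β q / q < (β q / q + r₀)/2 := by linarith
          have h2 := (div_lt_iff₀ hq0).1 h1
          linarith
        have hβqr₁ : β q < r₁ * q :=
          lt_of_lt_of_le hmid (mul_le_mul_of_nonneg_right hr₁ge hq0.le)
        have hle : f r₁ ≤ q := csInf_le (hbdd r₁) ⟨hq0, hq1, hβqr₁⟩
        linarith
    -- right approach: find r₂ > r₀ with a - ε < f r₂
    obtain ⟨r₂, hr₂gt, hfr₂⟩ : ∃ r₂ : ℝ, r₀ < r₂ ∧ a - ε < f r₂ := by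
      by_contra h
      push_neg at h
      have hall : ∀ r : ℝ, r₀ < r → f r ≤ a - ε := fun r hr => h r hr
      have hεa : ε ≤ a := by
        have h1 := hall (r₀ + 1) (by linarith)
        have h2 := hf0 (r₀ + 1)
        linarith
      -- β q = r₀ q on (a - ε, a)
      have heq : ∀ q : ℝ, a - ε < q → q < a → β q = r₀ * q := by
        intro q hq1 hq2
        have hq0 : 0 < q := by linarith
        have hqle1 : q ≤ 1 := by linarith
        have hupper : β q ≤ r₀ * q := by
          by_contra hc
          push_neg at hc
          obtain ⟨r, hrdef⟩ : ∃ r : ℝ, r = β q / q := ⟨_, rfl⟩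
          have hrgt : r₀ < r := hrdef ▸ (lt_div_iff₀ hq0).2 hc
          have hmem := (hchar r (lt_trans hr₀ hrgt) q
            (lt_of_le_of_lt (hall r hrgt) hq1) hqle1).2.2
          rw [hrdef, div_mul_cancel₀ _ hq0.ne'] at hmem
          exact lt_irrefl _ hmem
        have hlower : r₀ * q ≤ β q := by
          by_contra hc
          push_neg at hc
          have hle : f r₀ ≤ q := csInf_le (hbdd r₀) ⟨hq0, hqle1, hc⟩
          rw [← hadef] at hle
          linarith
        linarith
      -- convexity contradiction
      obtain ⟨q₁, hq₁def⟩ : ∃ x : ℝ, x = a - ε/2 := ⟨_, rfl⟩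
      obtain ⟨q₂, hq₂def⟩ : ∃ x : ℝ, x = a - ε/4 := ⟨_, rfl⟩
      have hq₁0 : 0 < q₁ := by rw [hq₁def]; linarith
      have hq₂1 : q₂ < 1 := by rw [hq₂def]; linarith
      have heq₁ : β q₁ = r₀ * q₁ := heq q₁ (by rw [hq₁def]; linarith) (by rw [hq₁def]; linarith)
      have heq₂ : β q₂ = r₀ * q₂ := heq q₂ (by rw [hq₂def]; linarith) (by rw [hq₂def]; linarith)
      have hq₁2 : q₁ < q₂ := by rw [hq₁def, hq₂def]; linarith
      have hq₁1 : q₁ < 1 := lt_trans hq₁2 hq₂1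
      have h1q₁ : (0:ℝ) < 1 - q₁ := by linarith
      obtain ⟨t, htdef⟩ : ∃ t : ℝ, t = (q₂ - q₁) / (1 - q₁) := ⟨_, rfl⟩
      have ht0 : 0 < t := htdef ▸ div_pos (by linarith) h1q₁
      have ht1 : t < 1 := by rw [htdef, div_lt_one h1q₁]; linarith
      have hcomb : (1 - t) * q₁ + t * 1 = q₂ := by
        rw [htdef]; field_simp; ring
      have hcx := hconv.2 (x := q₁) (y := 1) ⟨hq₁0.le, hq₁1.le⟩
        ⟨zero_le_one, le_refl 1⟩ (by linarith : (0:ℝ) ≤ 1 - t) ht0.le (by ring)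
      rw [smul_eq_mul, smul_eq_mul, smul_eq_mul, smul_eq_mul, hcomb, hβ1, heq₁, heq₂] at hcx
      nlinarith [mul_pos hr₀ ht0]
    -- assemble ε-δ
    refine ⟨min (r₀ - r₁) (r₂ - r₀), lt_min (by linarith) (by linarith), ?_⟩
    intro r hr
    rw [Real.dist_eq] at hr
    obtain ⟨habs1, habs2⟩ := abs_lt.1 hr
    have hm1 := min_le_left (r₀ - r₁) (r₂ - r₀)
    have hm2 := min_le_right (r₀ - r₁) (r₂ - r₀)
    have hr1 : r₁ ≤ r := by linarith
    have hr2 : r ≤ r₂ := by linarith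
    have hhi : f r ≤ f r₁ := hanti r₁ r hr₁0 hr1
    have hlo : f r₂ ≤ f r := hanti r r₂ (by linarith) hr2
    rw [Real.dist_eq, ← hadef, abs_lt]
    constructor <;> linarith
  refine ⟨fun r hr => (hcont r hr).continuousWithinAt, ?_⟩
  exact ((continuousOn_id.mul (fun r hr => (hcont r hr).continuousWithinAt)).div
    (continuousOn_const.sub (fun r hr => (hcont r hr).continuousWithinAt))
    (fun r hr => sub_ne_zero_of_ne (hlt1 r hr).ne'))
end

section
/- For any two compactly supported Borel probability measures ν_1 and ν_2 on R^d, p ∈ (0,1), and r > 0, the upper quantization dimension of the mixture satisfies D̄_r(pν_1 + (1−p)ν_2) = max{D̄_r(ν_1), D̄_r(ν_2)}. -/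
open MeasureTheory Filter

/-- The half-open dyadic cube of generation `n` indexed by `k ∈ ℤ^d`. -/
def dyadicCube (d n : ℕ) (k : Fin d → ℤ) : Set (EuclideanSpace ℝ (Fin d)) :=
  {x | ∀ i, (k i : ℝ) * 2 ^ (-(n : ℤ)) < x i ∧ x i ≤ ((k i : ℝ) + 1) * 2 ^ (-(n : ℤ))}

/-- `Σ_{C ∈ D_n} ν(C)^q`, with the convention `0^0 = 0` (cubes of measure zero
are discarded). -/
noncomputable def lqSum {d : ℕ} (ν : Measure (EuclideanSpace ℝ (Fin d)))
    (n : ℕ) (q : ℝ) : ℝ :=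
  ∑' k : Fin d → ℤ,
    if ν (dyadicCube d n k) = 0 then 0 else (ν (dyadicCube d n k)).toReal ^ q

/-- The `n`-th approximation `β_{ν,n}(q) = log (Σ_{C ∈ D_n} ν(C)^q) / log 2^n`. -/
noncomputable def lqSpectrumN {d : ℕ} (ν : Measure (EuclideanSpace ℝ (Fin d)))
    (n : ℕ) (q : ℝ) : ℝ :=
  Real.log (lqSum ν n q) / (n * Real.log 2)

/-- The `L^q`-spectrum `β_ν(q) = limsup_n β_{ν,n}(q)`. -/
noncomputable def lqSpectrum {d : ℕ} (ν : Measure (EuclideanSpace ℝ (Fin d)))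
    (q : ℝ) : ℝ :=
  Filter.limsup (fun n : ℕ => lqSpectrumN ν n q) Filter.atTop

open Metric in
/-- The `n`-th quantization error of order `r`. -/
noncomputable def quantError {d : ℕ} (ν : Measure (EuclideanSpace ℝ (Fin d)))
    (n : ℕ) (r : ℝ) : ℝ :=
  sInf ((fun α : Finset (EuclideanSpace ℝ (Fin d)) =>
      (∫ x, infDist x (α : Set (EuclideanSpace ℝ (Fin d))) ^ r ∂ν) ^ (1 / r)) ''
    {α : Finset (EuclideanSpace ℝ (Fin d)) | α.Nonempty ∧ α.card ≤ n})

/-- The upper quantization dimension `D̄_r(ν) = limsup_n log n / (- log e_{n,r}(ν))`. -/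
noncomputable def upperQDim {d : ℕ} (ν : Measure (EuclideanSpace ℝ (Fin d)))
    (r : ℝ) : ℝ :=
  Filter.limsup (fun n : ℕ => Real.log n / (- Real.log (quantError ν n r))) Filter.atTop

/-- The lower quantization dimension `D̲_r(ν) = liminf_n log n / (- log e_{n,r}(ν))`. -/
noncomputable def lowerQDim {d : ℕ} (ν : Measure (EuclideanSpace ℝ (Fin d)))
    (r : ℝ) : ℝ :=
  Filter.liminf (fun n : ℕ => Real.log n / (- Real.log (quantError ν n r))) Filter.atTop


open Metric

namespace QD
section


variable {d : ℕ} {ν : Measure (EuclideanSpace ℝ (Fin d))} {n m : ℕ} {r : ℝ}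

lemma valSet_nonneg (α : Finset (EuclideanSpace ℝ (Fin d))) :
    0 ≤ (∫ x, infDist x (α : Set (EuclideanSpace ℝ (Fin d))) ^ r ∂ν) ^ (1 / r) := by
  apply Real.rpow_nonneg
  exact integral_nonneg fun x => Real.rpow_nonneg Metric.infDist_nonneg r

lemma bddBelow_valSet :
    BddBelow ((fun α : Finset (EuclideanSpace ℝ (Fin d)) =>
      (∫ x, infDist x (α : Set (EuclideanSpace ℝ (Fin d))) ^ r ∂ν) ^ (1 / r)) ''
    {α : Finset (EuclideanSpace ℝ (Fin d)) | α.Nonempty ∧ α.card ≤ n}) := by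
  refine ⟨0, fun y hy => ?_⟩
  rcases hy with ⟨α, -, rfl⟩
  exact valSet_nonneg α

lemma quantError_nonneg : 0 ≤ quantError ν n r := by
  rcases Set.eq_empty_or_nonempty ((fun α : Finset (EuclideanSpace ℝ (Fin d)) =>
      (∫ x, infDist x (α : Set (EuclideanSpace ℝ (Fin d))) ^ r ∂ν) ^ (1 / r)) ''
    {α : Finset (EuclideanSpace ℝ (Fin d)) | α.Nonempty ∧ α.card ≤ n}) with h | h
  · unfold quantError; rw [h, Real.sInf_empty]
  · exact le_csInf h (by rintro b ⟨α, -, rfl⟩; exact valSet_nonneg α)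

lemma quantError_le {α : Finset (EuclideanSpace ℝ (Fin d))} (hne : α.Nonempty)
    (hcard : α.card ≤ n) :
    quantError ν n r ≤ (∫ x, infDist x (α : Set (EuclideanSpace ℝ (Fin d))) ^ r ∂ν) ^ (1 / r) :=
  csInf_le bddBelow_valSet ⟨α, ⟨hne, hcard⟩, rfl⟩

lemma quantError_antitone (hn : 1 ≤ n) (h : n ≤ m) :
    quantError ν m r ≤ quantError ν n r := by
  refine csInf_le_csInf bddBelow_valSet ⟨_, ⟨{0}, ⟨Finset.singleton_nonempty _, by simpa⟩, rfl⟩⟩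
    (Set.image_mono fun α hα => ⟨hα.1, hα.2.trans h⟩)

lemma le_quantError (hn : 1 ≤ n) {b : ℝ}
    (h : ∀ α : Finset (EuclideanSpace ℝ (Fin d)), α.Nonempty → α.card ≤ n →
      b ≤ (∫ x, infDist x (α : Set (EuclideanSpace ℝ (Fin d))) ^ r ∂ν) ^ (1 / r)) :
    b ≤ quantError ν n r := by
  refine le_csInf ⟨_, ⟨{0}, ⟨Finset.singleton_nonempty _, by simpa⟩, rfl⟩⟩ ?_
  rintro y ⟨α, ⟨hne, hcard⟩, rfl⟩
  exact h α hne hcard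

variable {d : ℕ} {ν ν₁ ν₂ : Measure (EuclideanSpace ℝ (Fin d))} {n m : ℕ} {r : ℝ}

lemma continuous_f (α : Finset (EuclideanSpace ℝ (Fin d))) (hr : 0 < r) :
    Continuous (fun x => infDist x (α : Set (EuclideanSpace ℝ (Fin d))) ^ r) :=
  (continuous_infDist_pt _).rpow_const (fun _ => Or.inr hr.le)

lemma integrable_f [IsFiniteMeasure ν] {K : Set (EuclideanSpace ℝ (Fin d))}
    (hK : IsCompact K) (hν : ν Kᶜ = 0) (α : Finset (EuclideanSpace ℝ (Fin d)))
    (hα : α.Nonempty) (hr : 0 < r) :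
    Integrable (fun x => infDist x (α : Set (EuclideanSpace ℝ (Fin d))) ^ r) ν := by
  obtain ⟨a, ha⟩ := hα
  obtain ⟨R, hR⟩ := hK.isBounded.subset_closedBall 0
  have hae : ∀ᵐ x ∂ν, x ∈ K := by
    rw [MeasureTheory.ae_iff]
    exact hν
  refine Integrable.mono' (integrable_const ((R + ‖a‖) ^ r))
    (continuous_f α hr).aestronglyMeasurable ?_
  filter_upwards [hae] with x hx
  rw [Real.norm_of_nonneg (Real.rpow_nonneg infDist_nonneg r)]
  have h1 : infDist x (α : Set (EuclideanSpace ℝ (Fin d))) ≤ R + ‖a‖ := by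
    refine (infDist_le_dist_of_mem (by exact_mod_cast ha)).trans ?_
    have := hR hx
    simp only [Metric.mem_closedBall, dist_zero_right] at this
    calc dist x a ≤ ‖x‖ + ‖a‖ := by
          simpa [dist_eq_norm] using norm_sub_le x a
      _ ≤ R + ‖a‖ := by linarith
  exact Real.rpow_le_rpow infDist_nonneg h1 hr.le
lemma integral_mix (hp : p ∈ Set.Ioo (0:ℝ) 1) (f : EuclideanSpace ℝ (Fin d) → ℝ)
    (h1 : Integrable f ν₁) (h2 : Integrable f ν₂) :
    ∫ x, f x ∂(ENNReal.ofReal p • ν₁ + ENNReal.ofReal (1 - p) • ν₂) =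
      p * ∫ x, f x ∂ν₁ + (1 - p) * ∫ x, f x ∂ν₂ := by
  rw [integral_add_measure (h1.smul_measure ENNReal.ofReal_ne_top)
      (h2.smul_measure ENNReal.ofReal_ne_top), integral_smul_measure, integral_smul_measure,
    ENNReal.toReal_ofReal hp.1.le, ENNReal.toReal_ofReal (by linarith [hp.2])]
  simp [smul_eq_mul]

lemma integral_f_nonneg (α : Finset (EuclideanSpace ℝ (Fin d))) :
    0 ≤ ∫ x, infDist x (α : Set (EuclideanSpace ℝ (Fin d))) ^ r ∂ν :=
  integral_nonneg fun x => Real.rpow_nonneg infDist_nonneg r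

lemma key_ge [IsProbabilityMeasure ν₁] [IsProbabilityMeasure ν₂]
    {K₁ K₂ : Set (EuclideanSpace ℝ (Fin d))}
    (hK₁ : IsCompact K₁) (hν₁ : ν₁ K₁ᶜ = 0) (hK₂ : IsCompact K₂) (hν₂ : ν₂ K₂ᶜ = 0)
    (hp : p ∈ Set.Ioo (0:ℝ) 1) (hr : 0 < r) (hn : 1 ≤ n) :
    p ^ (1/r) * quantError ν₁ n r ≤
      quantError (ENNReal.ofReal p • ν₁ + ENNReal.ofReal (1 - p) • ν₂) n r := by
  refine le_quantError hn ?_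
  intro α hα hcard
  have h1 := integrable_f hK₁ hν₁ α hα hr
  have h2 := integrable_f hK₂ hν₂ α hα hr
  have hdec := integral_mix hp _ h1 h2
  have hI1 := integral_f_nonneg (ν := ν₁) (r := r) α
  have hI2 := integral_f_nonneg (ν := ν₂) (r := r) α
  have hle : p * (∫ x, infDist x (α : Set (EuclideanSpace ℝ (Fin d))) ^ r ∂ν₁) ≤
      ∫ x, infDist x (α : Set (EuclideanSpace ℝ (Fin d))) ^ r
        ∂(ENNReal.ofReal p • ν₁ + ENNReal.ofReal (1 - p) • ν₂) := by
    rw [hdec]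
    nlinarith [hp.2, hI2]
  calc p ^ (1/r) * quantError ν₁ n r
      ≤ p ^ (1/r) * (∫ x, infDist x (α : Set (EuclideanSpace ℝ (Fin d))) ^ r ∂ν₁) ^ (1/r) := by
        have := quantError_le (ν := ν₁) (r := r) hα hcard
        exact mul_le_mul_of_nonneg_left this (Real.rpow_nonneg hp.1.le _)
    _ = (p * ∫ x, infDist x (α : Set (EuclideanSpace ℝ (Fin d))) ^ r ∂ν₁) ^ (1/r) :=
        (Real.mul_rpow hp.1.le hI1).symm
    _ ≤ (∫ x, infDist x (α : Set (EuclideanSpace ℝ (Fin d))) ^ r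
          ∂(ENNReal.ofReal p • ν₁ + ENNReal.ofReal (1 - p) • ν₂)) ^ (1/r) :=
        Real.rpow_le_rpow (mul_nonneg hp.1.le hI1) hle (by positivity)

lemma key_le [IsProbabilityMeasure ν₁] [IsProbabilityMeasure ν₂]
    {K₁ K₂ : Set (EuclideanSpace ℝ (Fin d))}
    (hK₁ : IsCompact K₁) (hν₁ : ν₁ K₁ᶜ = 0) (hK₂ : IsCompact K₂) (hν₂ : ν₂ K₂ᶜ = 0)
    (hp : p ∈ Set.Ioo (0:ℝ) 1) (hr : 0 < r) (hn : 1 ≤ n) :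
    quantError (ENNReal.ofReal p • ν₁ + ENNReal.ofReal (1 - p) • ν₂) (2*n) r ≤
      max (quantError ν₁ n r) (quantError ν₂ n r) := by
  set E₁ := quantError ν₁ n r
  set E₂ := quantError ν₂ n r
  refine le_of_forall_pos_le_add ?_
  intro ε hε
  classical
  have hne1 : ((fun α : Finset (EuclideanSpace ℝ (Fin d)) =>
      (∫ x, infDist x (α : Set (EuclideanSpace ℝ (Fin d))) ^ r ∂ν₁) ^ (1 / r)) ''
    {α : Finset (EuclideanSpace ℝ (Fin d)) | α.Nonempty ∧ α.card ≤ n}).Nonempty :=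
    ⟨_, ⟨{0}, ⟨Finset.singleton_nonempty _, by simpa⟩, rfl⟩⟩
  have hne2 : ((fun α : Finset (EuclideanSpace ℝ (Fin d)) =>
      (∫ x, infDist x (α : Set (EuclideanSpace ℝ (Fin d))) ^ r ∂ν₂) ^ (1 / r)) ''
    {α : Finset (EuclideanSpace ℝ (Fin d)) | α.Nonempty ∧ α.card ≤ n}).Nonempty :=
    ⟨_, ⟨{0}, ⟨Finset.singleton_nonempty _, by simpa⟩, rfl⟩⟩
  obtain ⟨y₁, ⟨α₁, ⟨hα₁ne, hα₁c⟩, rfl⟩, hy₁⟩ :=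
    exists_lt_of_csInf_lt hne1 (lt_add_of_pos_right E₁ hε)
  obtain ⟨y₂, ⟨α₂, ⟨hα₂ne, hα₂c⟩, rfl⟩, hy₂⟩ :=
    exists_lt_of_csInf_lt hne2 (lt_add_of_pos_right E₂ hε)
  set α := α₁ ∪ α₂ with hα
  have hαne : α.Nonempty := hα₁ne.mono Finset.subset_union_left
  have hαc : α.card ≤ 2 * n := (Finset.card_union_le _ _).trans (by omega)
  set M := max E₁ E₂ with hM
  have hE₁ : (0:ℝ) ≤ E₁ := quantError_nonneg
  have hE₂ : (0:ℝ) ≤ E₂ := quantError_nonneg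
  have hMε : (0:ℝ) ≤ M + ε := by positivity
  -- pointwise bounds
  have hpt1 : ∀ x, infDist x (α : Set (EuclideanSpace ℝ (Fin d))) ^ r ≤
      infDist x (α₁ : Set (EuclideanSpace ℝ (Fin d))) ^ r := by
    intro x
    apply Real.rpow_le_rpow infDist_nonneg _ hr.le
    apply infDist_le_infDist_of_subset
    · exact_mod_cast Finset.subset_union_left
    · exact_mod_cast hα₁ne
  have hpt2 : ∀ x, infDist x (α : Set (EuclideanSpace ℝ (Fin d))) ^ r ≤
      infDist x (α₂ : Set (EuclideanSpace ℝ (Fin d))) ^ r := by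
    intro x
    apply Real.rpow_le_rpow infDist_nonneg _ hr.le
    apply infDist_le_infDist_of_subset
    · exact_mod_cast Finset.subset_union_right
    · exact_mod_cast hα₂ne
  have int1 : ∫ x, infDist x (α : Set (EuclideanSpace ℝ (Fin d))) ^ r ∂ν₁ ≤ (E₁ + ε) ^ r := by
    have h := integral_mono (integrable_f hK₁ hν₁ α hαne hr) (integrable_f hK₁ hν₁ α₁ hα₁ne hr)
      hpt1
    refine h.trans ?_
    have hI := integral_f_nonneg (ν := ν₁) (r := r) α₁
    calc ∫ x, infDist x (α₁ : Set (EuclideanSpace ℝ (Fin d))) ^ r ∂ν₁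
        = ((∫ x, infDist x (α₁ : Set (EuclideanSpace ℝ (Fin d))) ^ r ∂ν₁) ^ (1/r)) ^ r := by
          rw [← Real.rpow_mul hI, one_div, inv_mul_cancel₀ hr.ne', Real.rpow_one]
      _ ≤ (E₁ + ε) ^ r := Real.rpow_le_rpow (Real.rpow_nonneg hI _) hy₁.le hr.le
  have int2 : ∫ x, infDist x (α : Set (EuclideanSpace ℝ (Fin d))) ^ r ∂ν₂ ≤ (E₂ + ε) ^ r := by
    have h := integral_mono (integrable_f hK₂ hν₂ α hαne hr) (integrable_f hK₂ hν₂ α₂ hα₂ne hr)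
      hpt2
    refine h.trans ?_
    have hI := integral_f_nonneg (ν := ν₂) (r := r) α₂
    calc ∫ x, infDist x (α₂ : Set (EuclideanSpace ℝ (Fin d))) ^ r ∂ν₂
        = ((∫ x, infDist x (α₂ : Set (EuclideanSpace ℝ (Fin d))) ^ r ∂ν₂) ^ (1/r)) ^ r := by
          rw [← Real.rpow_mul hI, one_div, inv_mul_cancel₀ hr.ne', Real.rpow_one]
      _ ≤ (E₂ + ε) ^ r := Real.rpow_le_rpow (Real.rpow_nonneg hI _) hy₂.le hr.le
  have hmix := integral_mix hp _ (integrable_f hK₁ hν₁ α hαne hr)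
    (integrable_f hK₂ hν₂ α hαne hr)
  have h1M : (E₁ + ε) ^ r ≤ (M + ε) ^ r :=
    Real.rpow_le_rpow (by positivity) (add_le_add (le_max_left _ _) le_rfl) hr.le
  have h2M : (E₂ + ε) ^ r ≤ (M + ε) ^ r :=
    Real.rpow_le_rpow (by positivity) (add_le_add (le_max_right _ _) le_rfl) hr.le
  have hint : ∫ x, infDist x (α : Set (EuclideanSpace ℝ (Fin d))) ^ r
      ∂(ENNReal.ofReal p • ν₁ + ENNReal.ofReal (1 - p) • ν₂) ≤ (M + ε) ^ r := by
    rw [hmix]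
    nlinarith [hp.1, hp.2]
  calc quantError (ENNReal.ofReal p • ν₁ + ENNReal.ofReal (1 - p) • ν₂) (2*n) r
      ≤ (∫ x, infDist x (α : Set (EuclideanSpace ℝ (Fin d))) ^ r
          ∂(ENNReal.ofReal p • ν₁ + ENNReal.ofReal (1 - p) • ν₂)) ^ (1/r) :=
        quantError_le hαne hαc
    _ ≤ ((M + ε) ^ r) ^ (1/r) :=
        Real.rpow_le_rpow (integral_f_nonneg α) hint (by positivity)
    _ = M + ε := by
        rw [← Real.rpow_mul hMε, mul_one_div, div_self hr.ne', Real.rpow_one]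


lemma key_ge₂ [IsProbabilityMeasure ν₁] [IsProbabilityMeasure ν₂]
    {K₁ K₂ : Set (EuclideanSpace ℝ (Fin d))}
    (hK₁ : IsCompact K₁) (hν₁ : ν₁ K₁ᶜ = 0) (hK₂ : IsCompact K₂) (hν₂ : ν₂ K₂ᶜ = 0)
    (hp : p ∈ Set.Ioo (0:ℝ) 1) (hr : 0 < r) (hn : 1 ≤ n) :
    (1-p) ^ (1/r) * quantError ν₂ n r ≤
      quantError (ENNReal.ofReal p • ν₁ + ENNReal.ofReal (1 - p) • ν₂) n r := by
  refine le_quantError hn ?_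
  intro α hα hcard
  have h1 := integrable_f hK₁ hν₁ α hα hr
  have h2 := integrable_f hK₂ hν₂ α hα hr
  have hdec := integral_mix hp _ h1 h2
  have hI1 := integral_f_nonneg (ν := ν₁) (r := r) α
  have hI2 := integral_f_nonneg (ν := ν₂) (r := r) α
  have hq0 : (0:ℝ) ≤ 1 - p := by linarith [hp.2]
  have hle : (1-p) * (∫ x, infDist x (α : Set (EuclideanSpace ℝ (Fin d))) ^ r ∂ν₂) ≤
      ∫ x, infDist x (α : Set (EuclideanSpace ℝ (Fin d))) ^ r
        ∂(ENNReal.ofReal p • ν₁ + ENNReal.ofReal (1 - p) • ν₂) := by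
    rw [hdec]
    nlinarith [hp.1, hI1]
  calc (1-p) ^ (1/r) * quantError ν₂ n r
      ≤ (1-p) ^ (1/r) * (∫ x, infDist x (α : Set (EuclideanSpace ℝ (Fin d))) ^ r ∂ν₂) ^ (1/r) := by
        have := quantError_le (ν := ν₂) (r := r) hα hcard
        exact mul_le_mul_of_nonneg_left this (Real.rpow_nonneg hq0 _)
    _ = ((1-p) * ∫ x, infDist x (α : Set (EuclideanSpace ℝ (Fin d))) ^ r ∂ν₂) ^ (1/r) :=
        (Real.mul_rpow hq0 hI2).symm
    _ ≤ (∫ x, infDist x (α : Set (EuclideanSpace ℝ (Fin d))) ^ r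
          ∂(ENNReal.ofReal p • ν₁ + ENNReal.ofReal (1 - p) • ν₂)) ^ (1/r) :=
        Real.rpow_le_rpow (mul_nonneg hq0 hI2) hle (by positivity)

end



lemma exists_net (d : ℕ) {K : Set (EuclideanSpace ℝ (Fin d))} (hK : IsCompact K) :
    ∃ R : ℝ, 1 ≤ R ∧ ∀ m : ℕ, 1 ≤ m → ∃ α : Finset (EuclideanSpace ℝ (Fin d)),
      α.Nonempty ∧ α.card ≤ (2*m+3)^d ∧
      ∀ x ∈ K, infDist x (α : Set (EuclideanSpace ℝ (Fin d))) ≤ Real.sqrt d * R / m := by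
  classical
  obtain ⟨R₀, hR₀⟩ := hK.isBounded.subset_closedBall 0
  refine ⟨max R₀ 1, le_max_right _ _, ?_⟩
  set R := max R₀ 1 with hRdef
  have hR1 : (1:ℝ) ≤ R := le_max_right _ _
  have hRpos : (0:ℝ) < R := lt_of_lt_of_le one_pos hR1
  have hKR : K ⊆ Metric.closedBall 0 R :=
    hR₀.trans (Metric.closedBall_subset_closedBall (le_max_left _ _))
  intro m hm
  have hmpos : (0:ℝ) < m := by exact_mod_cast hm
  set δ := R / m with hδdef
  have hδpos : 0 < δ := div_pos hRpos hmpos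
  have hmδ : (m:ℝ) * δ = R := by rw [hδdef]; field_simp
  set grid : Finset (Fin d → ℤ) :=
    Fintype.piFinset fun _ => Finset.Icc (-(m+1:ℤ)) (m+1) with hgrid
  set α : Finset (EuclideanSpace ℝ (Fin d)) :=
    grid.image (fun k => (WithLp.equiv 2 (Fin d → ℝ)).symm (fun i => (k i : ℝ) * δ)) with hα
  have h0grid : (fun _ => 0 : Fin d → ℤ) ∈ grid := by
    simp [hgrid, Fintype.mem_piFinset]
    omega
  refine ⟨α, ⟨_, Finset.mem_image_of_mem _ h0grid⟩, ?_, ?_⟩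
  · refine (Finset.card_image_le).trans ?_
    rw [hgrid, Fintype.card_piFinset_const]
    gcongr
    rw [Int.card_Icc]
    simp
    omega
  · intro x hx
    have hxR : ‖x‖ ≤ R := by
      have := hKR hx
      simpa [Metric.mem_closedBall, dist_zero_right] using this
    have hcoord : ∀ i, |x i| ≤ R := by
      intro i
      refine le_trans ?_ hxR
      calc |x i| = Real.sqrt (‖x i‖^2) := by
            rw [Real.norm_eq_abs, Real.sqrt_sq_eq_abs, abs_abs]
        _ ≤ Real.sqrt (∑ j, ‖x j‖^2) := Real.sqrt_le_sqrt
            (Finset.single_le_sum (f := fun j => ‖x j‖^2) (fun j _ => by positivity)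
              (Finset.mem_univ i))
        _ = ‖x‖ := (EuclideanSpace.norm_eq x).symm
    set k : Fin d → ℤ := fun i => ⌊x i / δ⌋ with hk
    have hkmem : k ∈ grid := by
      simp only [hgrid, Fintype.mem_piFinset, Finset.mem_Icc]
      intro i
      have habs := abs_le.1 (hcoord i)
      have hub : x i / δ ≤ m := by
        rw [div_le_iff₀ hδpos]
        calc x i ≤ R := habs.2
          _ = m * δ := hmδ.symm
      have hlb : -(m:ℝ) ≤ x i / δ := by
        rw [le_div_iff₀ hδpos]
        calc -(m:ℝ) * δ = -(m * δ) := by ring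
          _ = -R := by rw [hmδ]
          _ ≤ x i := habs.1
      constructor
      · rw [Int.le_floor]
        push_cast
        linarith
      · have h3 : ⌊x i / δ⌋ ≤ ⌊(m:ℝ)⌋ := Int.floor_mono hub
        rw [Int.floor_natCast] at h3
        show ⌊x i / δ⌋ ≤ (m:ℤ) + 1
        omega
    set y : EuclideanSpace ℝ (Fin d) :=
      (WithLp.equiv 2 (Fin d → ℝ)).symm (fun i => (k i : ℝ) * δ) with hy
    have hymem : y ∈ (α : Set (EuclideanSpace ℝ (Fin d))) := by
      exact_mod_cast Finset.mem_image_of_mem _ hkmem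
    refine (infDist_le_dist_of_mem hymem).trans ?_
    have hdist : dist x y ≤ Real.sqrt d * δ := by
      rw [EuclideanSpace.dist_eq]
      have hterm : ∀ i, dist (x i) (y i) ^ 2 ≤ δ ^ 2 := by
        intro i
        have hyi : y i = (k i : ℝ) * δ := rfl
        have h1 : (k i : ℝ) ≤ x i / δ := Int.floor_le _
        have h2 : x i / δ < k i + 1 := Int.lt_floor_add_one _
        have h1' : (k i : ℝ) * δ ≤ x i := (le_div_iff₀ hδpos).1 h1
        have h2' : x i < ((k i : ℝ) + 1) * δ := (div_lt_iff₀ hδpos).1 h2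
        rw [add_mul, one_mul] at h2'
        have hd : |x i - y i| ≤ δ := by
          rw [hyi, abs_le]
          constructor
          · linarith
          · linarith
        calc dist (x i) (y i) ^ 2 = |x i - y i| ^ 2 := by
              rw [Real.dist_eq]
          _ ≤ δ ^ 2 := by nlinarith [abs_nonneg (x i - y i)]
      calc Real.sqrt (∑ i, dist (x i) (y i) ^ 2) ≤ Real.sqrt (∑ _i : Fin d, δ ^ 2) := by
            apply Real.sqrt_le_sqrt
            exact Finset.sum_le_sum fun i _ => hterm i
        _ = Real.sqrt d * δ := by
            rw [Finset.sum_const, Finset.card_univ, Fintype.card_fin, nsmul_eq_mul,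
              Real.sqrt_mul (by positivity), Real.sqrt_sq hδpos.le]
    calc dist x y ≤ Real.sqrt d * δ := hdist
      _ = Real.sqrt d * R / m := by rw [hδdef, mul_div_assoc]


section
variable {d : ℕ} {ν : Measure (EuclideanSpace ℝ (Fin d))} {r : ℝ}
/-- One-step bound: if we have a net of card `(2m+3)^d ≤ n` with mesh `B`, then
`quantError ν n r ≤ B`. -/
lemma quantError_le_of_net [IsProbabilityMeasure ν] {K : Set (EuclideanSpace ℝ (Fin d))}
    (hK : IsCompact K) (hν : ν Kᶜ = 0) (hr : 0 < r) {n : ℕ}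
    {α : Finset (EuclideanSpace ℝ (Fin d))} (hne : α.Nonempty) (hcard : α.card ≤ n)
    {B : ℝ} (hB : 0 ≤ B) (hmesh : ∀ x ∈ K, infDist x (α : Set (EuclideanSpace ℝ (Fin d))) ≤ B) :
    quantError ν n r ≤ B := by
  have hae : ∀ᵐ x ∂ν, x ∈ K := by rw [MeasureTheory.ae_iff]; exact hν
  have hint : ∫ x, infDist x (α : Set (EuclideanSpace ℝ (Fin d))) ^ r ∂ν ≤ B ^ r := by
    have h1 : ∫ x, infDist x (α : Set (EuclideanSpace ℝ (Fin d))) ^ r ∂ν ≤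
        ∫ _x, B ^ r ∂ν := by
      refine integral_mono_ae (integrable_f hK hν α hne hr) (integrable_const _) ?_
      filter_upwards [hae] with x hx
      exact Real.rpow_le_rpow infDist_nonneg (hmesh x hx) hr.le
    simpa [measure_univ] using h1
  calc quantError ν n r
      ≤ (∫ x, infDist x (α : Set (EuclideanSpace ℝ (Fin d))) ^ r ∂ν) ^ (1/r) :=
        quantError_le hne hcard
    _ ≤ (B ^ r) ^ (1/r) := Real.rpow_le_rpow
        (integral_nonneg fun x => Real.rpow_nonneg infDist_nonneg r) hint (by positivity)
    _ = B := by rw [← Real.rpow_mul hB, mul_one_div, div_self hr.ne', Real.rpow_one]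

lemma quantError_decay (hd : 1 ≤ d) [IsProbabilityMeasure ν]
    {K : Set (EuclideanSpace ℝ (Fin d))} (hK : IsCompact K) (hν : ν Kᶜ = 0) (hr : 0 < r) :
    ∃ c : ℝ, 1 ≤ c ∧ ∀ᶠ n : ℕ in atTop,
      quantError ν n r ≤ c * (n:ℝ) ^ (-(1/(d:ℝ))) := by
  obtain ⟨R, hR1, hnet⟩ := exists_net d hK
  have hdpos : (0:ℝ) < d := by exact_mod_cast hd
  have hsd : (1:ℝ) ≤ Real.sqrt d := by
    rw [show (1:ℝ) = Real.sqrt 1 by simp]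
    exact Real.sqrt_le_sqrt (by exact_mod_cast hd)
  refine ⟨12 * Real.sqrt d * R, by nlinarith, ?_⟩
  have htt : Tendsto (fun n : ℕ => ((n:ℝ)) ^ ((1:ℝ)/d)) atTop atTop :=
    (tendsto_rpow_atTop (by positivity)).comp tendsto_natCast_atTop_atTop
  filter_upwards [htt.eventually_ge_atTop 6, eventually_ge_atTop 1] with n ht hn1
  set t : ℝ := (n:ℝ) ^ ((1:ℝ)/d) with htdef
  have ht0 : 0 < t := by positivity
  set m : ℕ := ⌊(t - 3)/2⌋₊ with hmdef
  have hm1 : 1 ≤ m := by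
    rw [hmdef]
    rw [Nat.le_floor_iff (by linarith)]
    push_cast; linarith
  have hmles : (2*(m:ℝ)+3) ≤ t := by
    have := Nat.floor_le (show (0:ℝ) ≤ (t-3)/2 by linarith)
    rw [← hmdef] at this
    linarith
  have hmget : (t:ℝ)/12 ≤ m := by
    have := Nat.sub_one_lt_floor ((t-3)/2)
    rw [← hmdef] at this
    linarith
  have hcard : (2*m+3)^d ≤ n := by
    have hreal : ((2*m+3:ℕ):ℝ)^d ≤ (n:ℝ) := by
      calc ((2*m+3:ℕ):ℝ)^d ≤ t^d := by
            apply pow_le_pow_left₀ (by positivity) (by push_cast; linarith)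
        _ = (n:ℝ) := by
            rw [htdef, ← Real.rpow_natCast ((n:ℝ) ^ ((1:ℝ)/d)) d, ← Real.rpow_mul (by positivity),
              one_div, inv_mul_cancel₀ (by positivity), Real.rpow_one]
    exact_mod_cast (by push_cast at hreal ⊢; exact hreal : (((2*m+3)^d : ℕ):ℝ) ≤ (n:ℝ))
  obtain ⟨α, hαne, hαcard, hαmesh⟩ := hnet m hm1
  have hmain : quantError ν n r ≤ Real.sqrt d * R / m :=
    quantError_le_of_net hK hν hr hαne (hαcard.trans hcard) (by positivity)
      hαmesh
  refine hmain.trans ?_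
  have hmpos : (0:ℝ) < m := by exact_mod_cast hm1
  have hrpowneg : (n:ℝ) ^ (-(1/(d:ℝ))) = 1/t := by
    rw [Real.rpow_neg (Nat.cast_nonneg n), htdef, one_div, one_div]
  calc Real.sqrt d * R / m ≤ Real.sqrt d * R / (t/12) := by
        apply div_le_div_of_nonneg_left (by positivity) (by linarith) hmget
    _ = 12 * Real.sqrt d * R * (1/t) := by field_simp
    _ = 12 * Real.sqrt d * R * (n:ℝ) ^ (-(1/(d:ℝ))) := by rw [hrpowneg]


lemma upperQDim_dim_zero (ν : Measure (EuclideanSpace ℝ (Fin 0))) {r : ℝ} (hr : 0 < r) :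
    upperQDim ν r = 0 := by
  haveI : Subsingleton (EuclideanSpace ℝ (Fin 0)) := ⟨fun a b => PiLp.ext fun i => Fin.elim0 i⟩
  have hE : ∀ n : ℕ, 1 ≤ n → quantError ν n r = 0 := by
    intro n hn
    refine le_antisymm ?_ quantError_nonneg
    have h := quantError_le (ν := ν) (r := r)
      (α := ({0} : Finset (EuclideanSpace ℝ (Fin 0)))) (Finset.singleton_nonempty _) (by simpa)
    refine h.trans_eq ?_
    have hzero : (fun x : EuclideanSpace ℝ (Fin 0) =>
        infDist x (({0} : Finset (EuclideanSpace ℝ (Fin 0))) : Set (EuclideanSpace ℝ (Fin 0))) ^ r)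
        = fun _ => (0:ℝ) := by
      funext x
      have hx : x = 0 := Subsingleton.elim x 0
      have hmem : x ∈ (({0} : Finset (EuclideanSpace ℝ (Fin 0))) :
          Set (EuclideanSpace ℝ (Fin 0))) := by simp [hx]
      rw [infDist_zero_of_mem hmem, Real.zero_rpow hr.ne']
    rw [hzero, integral_zero, Real.zero_rpow (by positivity)]
  have hev : ∀ᶠ n : ℕ in atTop,
      Real.log n / (-Real.log (quantError ν n r)) = 0 := by
    filter_upwards [eventually_ge_atTop 1] with n hn
    rw [hE n hn, Real.log_zero, neg_zero, div_zero]
  rw [upperQDim, limsup_congr hev, limsup_const]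

end


noncomputable def aseq (E : ℕ → ℝ) (n : ℕ) : ℝ := Real.log n / (-Real.log (E n))

lemma logn_tendsto : Tendsto (fun n : ℕ => Real.log n) atTop atTop :=
  Real.tendsto_log_atTop.comp tendsto_natCast_atTop_atTop

lemma aux_bounds {E : ℕ → ℝ} {s c : ℝ} (hs : 0 < s)
    (hE : ∀ n, 0 ≤ E n)
    (hlog : ∀ᶠ n : ℕ in atTop, 0 < E n → s * Real.log n - c ≤ -Real.log (E n)) :
    ∀ᶠ n : ℕ in atTop, 0 ≤ aseq E n ∧ aseq E n ≤ 2/s := by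
  filter_upwards [eventually_ge_atTop 2, logn_tendsto.eventually_ge_atTop (2*c/s),
    logn_tendsto.eventually_ge_atTop 1, hlog] with n hn2 hnc hn1 hlogn
  rcases eq_or_lt_of_le (hE n) with h0 | hpos
  · simp [aseq, ← h0]
    positivity
  · have hX : s * Real.log n - c ≤ -Real.log (E n) := hlogn hpos
    have hc2 : 2*c ≤ Real.log n * s := (div_le_iff₀ hs).1 hnc
    have hX2 : s/2 * Real.log n ≤ -Real.log (E n) := by nlinarith
    have hXpos : 0 < -Real.log (E n) := lt_of_lt_of_le (by nlinarith) hX2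
    constructor
    · exact div_nonneg (by linarith) hXpos.le
    · calc aseq E n ≤ Real.log n / (s/2 * Real.log n) := by
            apply div_le_div_of_nonneg_left (by linarith) (by nlinarith) hX2
        _ = 2/s := by field_simp
lemma limsup_le_of_all_eps {a b : ℕ → ℝ} {B : ℝ}
    (ha0 : ∀ᶠ n : ℕ in atTop, 0 ≤ a n) (hb0 : ∀ᶠ n : ℕ in atTop, 0 ≤ b n)
    (hbB : ∀ᶠ n : ℕ in atTop, b n ≤ B)
    (h : ∀ ε : ℝ, 0 < ε → ∀ᶠ n : ℕ in atTop, a n ≤ b n + ε) :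
    limsup a atTop ≤ limsup b atTop := by
  refine le_of_forall_pos_le_add ?_
  intro ε hε
  have hco : IsCoboundedUnder (· ≤ ·) atTop a :=
    isCoboundedUnder_le_of_eventually_le atTop (x := 0) ha0
  have hbb : IsBoundedUnder (· ≤ ·) atTop (fun n => b n + ε) :=
    isBoundedUnder_of_eventually_le (a := B + ε)
      (by filter_upwards [hbB] with n h; exact add_le_add h le_rfl)
  calc limsup a atTop ≤ limsup (fun n => b n + ε) atTop :=
        limsup_le_limsup (h ε hε) hco hbb
    _ = limsup b atTop + ε :=
        limsup_add_const atTop b ε (isBoundedUnder_of_eventually_le hbB)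
          (isCoboundedUnder_le_of_eventually_le atTop (x := 0) hb0)

lemma limsup_comp_half {g : ℕ → ℝ} {B : ℝ}
    (hg0 : ∀ᶠ n : ℕ in atTop, 0 ≤ g n) (hgB : ∀ᶠ n : ℕ in atTop, g n ≤ B) :
    limsup (fun k : ℕ => g (k/2)) atTop ≤ limsup g atTop := by
  have hu : Tendsto (fun k : ℕ => k/2) atTop atTop := by
    refine tendsto_atTop_atTop.2 fun b => ⟨2*b, fun a ha => by omega⟩
  have hmap : limsup (fun k : ℕ => g (k/2)) atTop = limsup g (map (fun k : ℕ => k/2) atTop) :=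
    (Filter.limsup_comp g _ atTop).symm
  rw [hmap]
  haveI : NeBot (map (fun k : ℕ => k/2) atTop) := map_neBot
  refine limsup_le_limsup_of_le hu ?_ (isBoundedUnder_of_eventually_le hgB)
  exact isCoboundedUnder_le_of_eventually_le _ (x := 0) (hu.eventually hg0)
set_option maxHeartbeats 1000000 in
/-- Comparison `aseq Eν` vs `aseq Eμ` when `q^(1/r) Eν ≤ Eμ`. -/
lemma aseq_le_aux {Eν Eμ : ℕ → ℝ} {s cν cμ q r : ℝ} (hs : 0 < s) (hq : 0 < q) (hq1 : q < 1)
    (hr : 0 < r) (hEν : ∀ n, 0 ≤ Eν n)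
    (hkey : ∀ n : ℕ, 1 ≤ n → q ^ (1/r) * Eν n ≤ Eμ n)
    (hlogν : ∀ᶠ n : ℕ in atTop, 0 < Eν n → s * Real.log n - Real.log cν ≤ -Real.log (Eν n))
    (hlogμ : ∀ᶠ n : ℕ in atTop, 0 < Eμ n → s * Real.log n - Real.log cμ ≤ -Real.log (Eμ n))
    (hbμ : ∀ᶠ n : ℕ in atTop, 0 ≤ aseq Eμ n)
    {ε : ℝ} (hε : 0 < ε) :
    ∀ᶠ n : ℕ in atTop, aseq Eν n ≤ aseq Eμ n + ε := by
  set cp : ℝ := -Real.log q / r with hcp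
  have hcppos : 0 < cp := div_pos (neg_pos.2 (Real.log_neg hq hq1)) hr
  filter_upwards [eventually_ge_atTop 1, hlogν, hlogμ, hbμ,
    logn_tendsto.eventually_ge_atTop 1,
    logn_tendsto.eventually_ge_atTop (2 * Real.log cν / s),
    logn_tendsto.eventually_ge_atTop (2 * Real.log cμ / s),
    logn_tendsto.eventually_ge_atTop (4 * cp / (ε * s^2))] with n hn1 hlν hlμ hbμn hL1 hLν hLμ hLε
  set L : ℝ := Real.log n with hL
  rcases eq_or_lt_of_le (hEν n) with h0 | hνpos
  · have : aseq Eν n = 0 := by simp [aseq, ← h0]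
    rw [this]
    linarith
  · have hμpos : 0 < Eμ n := lt_of_lt_of_le (by positivity) (hkey n hn1)
    set x₁ : ℝ := -Real.log (Eν n) with hx₁
    set xμ : ℝ := -Real.log (Eμ n) with hxμ
    have haν : aseq Eν n = L / x₁ := rfl
    have haμ : aseq Eμ n = L / xμ := rfl
    have hlν' := hlν hνpos
    have hlμ' := hlμ hμpos
    have hmono : xμ ≤ x₁ + cp := by
      have hlog : Real.log (q ^ (1/r) * Eν n) ≤ Real.log (Eμ n) :=
        Real.log_le_log (by positivity) (hkey n hn1)
      rw [Real.log_mul (by positivity) hνpos.ne', Real.log_rpow hq] at hlog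
      have hdiv : 1/r * Real.log q = -cp := by rw [hcp]; ring
      rw [hxμ, hx₁]
      linarith [hlog, hdiv]
    clear_value cp L x₁ xμ
    have hsL : 0 < s * L := mul_pos hs (by linarith)
    have hcν2 : 2 * Real.log cν ≤ L * s := (div_le_iff₀ hs).1 hLν
    have hcμ2 : 2 * Real.log cμ ≤ L * s := (div_le_iff₀ hs).1 hLμ
    have hx₁big : s * L / 2 ≤ x₁ := by nlinarith
    have hx₁pos : 0 < x₁ := by nlinarith
    have hxμpos : 0 < xμ := by nlinarith
    have hx₁sq : L * cp ≤ x₁ ^ 2 * ε := by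
      have h1 : 4 * cp ≤ L * (ε * s^2) := (div_le_iff₀ (by positivity)).1 hLε
      nlinarith [mul_le_mul_of_nonneg_left h1 (show (0:ℝ) ≤ L/4 by linarith),
        mul_le_mul_of_nonneg_right (mul_self_le_mul_self (by linarith : (0:ℝ) ≤ s * L / 2)
          hx₁big) hε.le]
    have hstep1 : L / x₁ ≤ L / (x₁ + cp) + ε := by
      have heq : L / x₁ - L / (x₁ + cp) = L * cp / (x₁ * (x₁ + cp)) := by
        field_simp
        ring
      have hle1 : L * cp / (x₁ * (x₁ + cp)) ≤ L * cp / (x₁ * x₁) :=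
        div_le_div_of_nonneg_left (mul_nonneg (by linarith) hcppos.le)
          (mul_pos hx₁pos hx₁pos)
          (mul_le_mul_of_nonneg_left (le_add_of_nonneg_right hcppos.le) hx₁pos.le)
      have hle2 : L * cp / (x₁ * x₁) ≤ ε := by
        rw [div_le_iff₀ (mul_pos hx₁pos hx₁pos)]
        nlinarith
      linarith
    have hstep2 : L / (x₁ + cp) ≤ L / xμ :=
      div_le_div_of_nonneg_left (by linarith) hxμpos hmono
    rw [haν, haμ]
    linarith

set_option maxHeartbeats 1000000 in
lemma aseq_mix_le {E₁ E₂ Eμ : ℕ → ℝ} {s c₁ c₂ : ℝ} (hs : 0 < s)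
    (hEμ : ∀ n, 0 ≤ Eμ n)
    (hkey : ∀ k m : ℕ, 1 ≤ m → 2*m ≤ k → Eμ k ≤ max (E₁ m) (E₂ m))
    (hlog₁ : ∀ᶠ m : ℕ in atTop, 0 < E₁ m → s * Real.log m - Real.log c₁ ≤ -Real.log (E₁ m))
    (hlog₂ : ∀ᶠ m : ℕ in atTop, 0 < E₂ m → s * Real.log m - Real.log c₂ ≤ -Real.log (E₂ m))
    (ha₁ : ∀ᶠ m : ℕ in atTop, 0 ≤ aseq E₁ m)
    {ε : ℝ} (hε : 0 < ε) :
    ∀ᶠ k : ℕ in atTop, aseq Eμ k ≤ max (aseq E₁ (k/2)) (aseq E₂ (k/2)) + ε := by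
  have hu : Tendsto (fun k : ℕ => k/2) atTop atTop :=
    tendsto_atTop_atTop.2 fun b => ⟨2*b, fun a ha => by omega⟩
  have hlog4 : (0:ℝ) < Real.log 4 := Real.log_pos (by norm_num)
  have hmcond : ∀ᶠ m : ℕ in atTop,
      (0 < E₁ m → Real.log 4 / ε ≤ -Real.log (E₁ m)) ∧
      (0 < E₂ m → Real.log 4 / ε ≤ -Real.log (E₂ m)) ∧ 0 ≤ aseq E₁ m := by
    filter_upwards [hlog₁, hlog₂, ha₁,
      logn_tendsto.eventually_ge_atTop ((Real.log 4 / ε + Real.log c₁)/s),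
      logn_tendsto.eventually_ge_atTop ((Real.log 4 / ε + Real.log c₂)/s)]
      with m h1 h2 h3 hL1 hL2
    refine ⟨fun hp => ?_, fun hp => ?_, h3⟩
    · have := h1 hp
      have hs1 : Real.log 4 / ε + Real.log c₁ ≤ s * Real.log m := by
        rw [div_le_iff₀ hs] at hL1
        linarith
      linarith
    · have := h2 hp
      have hs1 : Real.log 4 / ε + Real.log c₂ ≤ s * Real.log m := by
        rw [div_le_iff₀ hs] at hL2
        linarith
      linarith
  filter_upwards [eventually_ge_atTop 2, hu.eventually hmcond] with k hk2 hm
  set m : ℕ := k/2 with hmdef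
  obtain ⟨hc1, hc2, ha1m⟩ := hm
  have hm1 : 1 ≤ m := by omega
  have hkm : 2*m ≤ k := by omega
  have hk4m : k ≤ 4*m := by omega
  rcases eq_or_lt_of_le (hEμ k) with h0 | hμpos
  · have hz : aseq Eμ k = 0 := by simp [aseq, ← h0]
    rw [hz]
    have : 0 ≤ max (aseq E₁ m) (aseq E₂ m) := le_max_of_le_left ha1m
    linarith
  · have hEk : Eμ k ≤ max (E₁ m) (E₂ m) := hkey k m hm1 hkm
    have hmaxpos : 0 < max (E₁ m) (E₂ m) := lt_of_lt_of_le hμpos hEk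
    have claim : ∀ E : ℕ → ℝ, 0 < E m → Eμ k ≤ E m →
        Real.log 4 / ε ≤ -Real.log (E m) → aseq Eμ k ≤ aseq E m + ε := by
      intro E hpos hle hXbig
      have hXpos : 0 < -Real.log (E m) := lt_of_lt_of_le (by positivity) hXbig
      have hXk : -Real.log (E m) ≤ -Real.log (Eμ k) :=
        neg_le_neg (Real.log_le_log hμpos hle)
      have hlogk0 : (0:ℝ) ≤ Real.log k :=
        Real.log_nonneg (by exact_mod_cast Nat.one_le_iff_ne_zero.2 (by omega))
      have hstep : aseq Eμ k ≤ Real.log k / (-Real.log (E m)) :=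
        div_le_div_of_nonneg_left hlogk0 hXpos hXk
      have hklog : Real.log k ≤ Real.log 4 + Real.log m := by
        have h1 : Real.log k ≤ Real.log ((4*m : ℕ) : ℝ) :=
          Real.log_le_log (by exact_mod_cast (by omega : 0 < k)) (by exact_mod_cast hk4m)
        rw [show ((4*m : ℕ) : ℝ) = 4 * (m:ℝ) by push_cast; ring,
          Real.log_mul (by norm_num) (by exact_mod_cast Nat.one_le_iff_ne_zero.1 hm1)] at h1
        exact h1
      have hsplit : Real.log k / (-Real.log (E m)) ≤
          Real.log 4 / (-Real.log (E m)) + Real.log m / (-Real.log (E m)) := by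
        rw [← add_div]
        exact div_le_div_of_nonneg_right hklog hXpos.le |>.trans_eq rfl
      have h4 : Real.log 4 / (-Real.log (E m)) ≤ ε := by
        rw [div_le_iff₀ hXpos]
        rw [div_le_iff₀ hε] at hXbig
        nlinarith
      have haE : aseq E m = Real.log m / (-Real.log (E m)) := rfl
      rw [haE]
      linarith
    rcases le_total (E₂ m) (E₁ m) with hc | hc
    · have h1pos : 0 < E₁ m := by rwa [max_eq_left hc] at hmaxpos
      have := claim E₁ h1pos (hEk.trans_eq (max_eq_left hc)) (hc1 h1pos)
      exact this.trans (add_le_add (le_max_left _ _) le_rfl)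
    · have h2pos : 0 < E₂ m := by rwa [max_eq_right hc] at hmaxpos
      have := claim E₂ h2pos (hEk.trans_eq (max_eq_right hc)) (hc2 h2pos)
      exact this.trans (add_le_add (le_max_right _ _) le_rfl)

lemma log_form {E : ℕ → ℝ} {c s : ℝ} (hc : 1 ≤ c) (hs : 0 < s)
    (hdec : ∀ᶠ n : ℕ in atTop, E n ≤ c * (n:ℝ) ^ (-s)) :
    ∀ᶠ n : ℕ in atTop, 0 < E n → s * Real.log n - Real.log c ≤ -Real.log (E n) := by
  filter_upwards [hdec, eventually_ge_atTop 1] with n hd hn1 hpos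
  have hn0 : (0:ℝ) < n := by exact_mod_cast hn1
  have hlog := Real.log_le_log hpos hd
  rw [Real.log_mul (by positivity) (by positivity), Real.log_rpow hn0] at hlog
  linarith

end QD

/-- Finite stability: the upper quantization dimension of a mixture
`p ν₁ + (1-p) ν₂` of two compactly supported probability measures equals the
maximum of the individual upper quantization dimensions. -/
theorem upperQDim_mixture {d : ℕ} (ν₁ ν₂ : Measure (EuclideanSpace ℝ (Fin d)))
    [IsProbabilityMeasure ν₁] [IsProbabilityMeasure ν₂]
    (K₁ K₂ : Set (EuclideanSpace ℝ (Fin d)))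
    (hK₁ : IsCompact K₁) (hν₁ : ν₁ K₁ᶜ = 0)
    (hK₂ : IsCompact K₂) (hν₂ : ν₂ K₂ᶜ = 0)
    (p : ℝ) (hp : p ∈ Set.Ioo (0 : ℝ) 1) (r : ℝ) (hr : 0 < r) :
    upperQDim (ENNReal.ofReal p • ν₁ + ENNReal.ofReal (1 - p) • ν₂) r =
      max (upperQDim ν₁ r) (upperQDim ν₂ r) := by
  classical
  have hp0 := hp.1
  have hp1 := hp.2
  set μ : Measure (EuclideanSpace ℝ (Fin d)) :=
    ENNReal.ofReal p • ν₁ + ENNReal.ofReal (1 - p) • ν₂ with hμdef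
  haveI hμprob : IsProbabilityMeasure μ := by
    constructor
    rw [hμdef]
    simp only [Measure.add_apply, Measure.smul_apply, smul_eq_mul, measure_univ, mul_one]
    rw [← ENNReal.ofReal_add (by linarith) (by linarith)]
    norm_num
  rcases Nat.eq_zero_or_pos d with hd0 | hd1
  · subst hd0
    rw [QD.upperQDim_dim_zero ν₁ hr, QD.upperQDim_dim_zero ν₂ hr,
      QD.upperQDim_dim_zero μ hr]
    simp
  · have hdR : (0:ℝ) < d := by exact_mod_cast hd1
    have hs : (0:ℝ) < 1/(d:ℝ) := by positivity
    have hK : IsCompact (K₁ ∪ K₂) := hK₁.union hK₂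
    have hν₁' : ν₁ (K₁ ∪ K₂)ᶜ = 0 :=
      measure_mono_null (Set.compl_subset_compl.2 Set.subset_union_left) hν₁
    have hν₂' : ν₂ (K₁ ∪ K₂)ᶜ = 0 :=
      measure_mono_null (Set.compl_subset_compl.2 Set.subset_union_right) hν₂
    have hμK : μ (K₁ ∪ K₂)ᶜ = 0 := by
      have hdecomp : μ (K₁ ∪ K₂)ᶜ = ENNReal.ofReal p * ν₁ (K₁ ∪ K₂)ᶜ +
          ENNReal.ofReal (1-p) * ν₂ (K₁ ∪ K₂)ᶜ := by
        rw [hμdef]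
        simp [Measure.add_apply, Measure.smul_apply, smul_eq_mul]
      rw [hdecomp, hν₁', hν₂', mul_zero, mul_zero, add_zero]
    obtain ⟨c₁, hc₁, hdec₁⟩ := QD.quantError_decay hd1 hK₁ hν₁ hr
    obtain ⟨c₂, hc₂, hdec₂⟩ := QD.quantError_decay hd1 hK₂ hν₂ hr
    obtain ⟨cμ, hcμ, hdecμ⟩ := QD.quantError_decay hd1 hK hμK hr
    set E₁ : ℕ → ℝ := fun n => quantError ν₁ n r with hE₁def
    set E₂ : ℕ → ℝ := fun n => quantError ν₂ n r with hE₂def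
    set Eμ : ℕ → ℝ := fun n => quantError μ n r with hEμdef
    have hE₁0 : ∀ n, 0 ≤ E₁ n := fun n => QD.quantError_nonneg
    have hE₂0 : ∀ n, 0 ≤ E₂ n := fun n => QD.quantError_nonneg
    have hEμ0 : ∀ n, 0 ≤ Eμ n := fun n => QD.quantError_nonneg
    have hlog₁ := QD.log_form hc₁ hs hdec₁
    have hlog₂ := QD.log_form hc₂ hs hdec₂
    have hlogμ := QD.log_form hcμ hs hdecμ
    have hb₁ := QD.aux_bounds hs hE₁0 hlog₁
    have hb₂ := QD.aux_bounds hs hE₂0 hlog₂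
    have hbμ := QD.aux_bounds hs hEμ0 hlogμ
    show Filter.limsup (QD.aseq Eμ) Filter.atTop =
      max (Filter.limsup (QD.aseq E₁) Filter.atTop) (Filter.limsup (QD.aseq E₂) Filter.atTop)
    apply le_antisymm
    · have hkey : ∀ k m : ℕ, 1 ≤ m → 2*m ≤ k → Eμ k ≤ max (E₁ m) (E₂ m) := by
        intro k m hm hmk
        have h1 : Eμ k ≤ Eμ (2*m) := QD.quantError_antitone (by omega) hmk
        exact h1.trans (QD.key_le hK₁ hν₁ hK₂ hν₂ hp hr hm)
      have hu : Filter.Tendsto (fun k : ℕ => k/2) Filter.atTop Filter.atTop :=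
        Filter.tendsto_atTop_atTop.2 fun b => ⟨2*b, fun a ha => by omega⟩
      have hb0 : ∀ᶠ k : ℕ in Filter.atTop,
          0 ≤ max (QD.aseq E₁ (k/2)) (QD.aseq E₂ (k/2)) := by
        filter_upwards [hu.eventually hb₁] with k h
        exact le_max_of_le_left h.1
      have hbB : ∀ᶠ k : ℕ in Filter.atTop,
          max (QD.aseq E₁ (k/2)) (QD.aseq E₂ (k/2)) ≤ 2/(1/(d:ℝ)) := by
        filter_upwards [hu.eventually hb₁, hu.eventually hb₂] with k h1 h2
        exact max_le h1.2 h2.2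
      have hstep : ∀ ε : ℝ, 0 < ε → ∀ᶠ k : ℕ in Filter.atTop,
          QD.aseq Eμ k ≤ max (QD.aseq E₁ (k/2)) (QD.aseq E₂ (k/2)) + ε := fun ε hε =>
        QD.aseq_mix_le hs hEμ0 hkey hlog₁ hlog₂ (hb₁.mono fun n h => h.1) hε
      have h1 : Filter.limsup (QD.aseq Eμ) Filter.atTop ≤
          Filter.limsup (fun k : ℕ => max (QD.aseq E₁ (k/2)) (QD.aseq E₂ (k/2)))
            Filter.atTop :=
        QD.limsup_le_of_all_eps (hbμ.mono fun n h => h.1) hb0 hbB hstep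
      have h2 : Filter.limsup (fun k : ℕ => max (QD.aseq E₁ (k/2)) (QD.aseq E₂ (k/2)))
            Filter.atTop ≤
          Filter.limsup (fun m : ℕ => max (QD.aseq E₁ m) (QD.aseq E₂ m)) Filter.atTop :=
        QD.limsup_comp_half (g := fun m : ℕ => max (QD.aseq E₁ m) (QD.aseq E₂ m))
          (by filter_upwards [hb₁] with m h; exact le_max_of_le_left h.1)
          (by filter_upwards [hb₁, hb₂] with m ha hb; exact max_le ha.2 hb.2)
      have h3 : Filter.limsup (fun m : ℕ => max (QD.aseq E₁ m) (QD.aseq E₂ m)) Filter.atTop =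
          max (Filter.limsup (QD.aseq E₁) Filter.atTop)
            (Filter.limsup (QD.aseq E₂) Filter.atTop) :=
        limsup_max
          (Filter.isCoboundedUnder_le_of_eventually_le _ (x := 0) (hb₁.mono fun n h => h.1))
          (Filter.isCoboundedUnder_le_of_eventually_le _ (x := 0) (hb₂.mono fun n h => h.1))
          (Filter.isBoundedUnder_of_eventually_le (hb₁.mono fun n h => h.2))
          (Filter.isBoundedUnder_of_eventually_le (hb₂.mono fun n h => h.2))
      exact (h1.trans h2).trans_eq h3
    · refine max_le ?_ ?_
      · have hkey : ∀ n : ℕ, 1 ≤ n → p ^ (1/r) * E₁ n ≤ Eμ n := fun n hn =>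
          QD.key_ge hK₁ hν₁ hK₂ hν₂ hp hr hn
        exact QD.limsup_le_of_all_eps (hb₁.mono fun n h => h.1) (hbμ.mono fun n h => h.1)
          (hbμ.mono fun n h => h.2)
          (fun ε hε => QD.aseq_le_aux hs hp0 hp1 hr hE₁0 hkey hlog₁ hlogμ
            (hbμ.mono fun n h => h.1) hε)
      · have hkey : ∀ n : ℕ, 1 ≤ n → (1-p) ^ (1/r) * E₂ n ≤ Eμ n := fun n hn =>
          QD.key_ge₂ hK₁ hν₁ hK₂ hν₂ hp hr hn
        exact QD.limsup_le_of_all_eps (hb₂.mono fun n h => h.1) (hbμ.mono fun n h => h.1)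
          (hbμ.mono fun n h => h.2)
          (fun ε hε => QD.aseq_le_aux hs (by linarith) (by linarith) hr hE₂0 hkey hlog₂ hlogμ
            (hbμ.mono fun n h => h.1) hε)
end
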